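/- For positive integers m and n, not both 1, the pegging number of the Cartesian product K_m × K_n is min{m, n} + 1. -/

import Mathlib

open SimpleGraph Finset

variable {V : Type*} {W : Type*}

/-- A pegging move: remove pegs from adjacent pegged vertices `u, v`,
place a peg on an empty vertex `w` adjacent to `v`. -/
def PegMove {V : Type*} (G : SimpleGraph V) [DecidableEq V] (D D' : Finset V) : Prop :=
  ∃ u v w : V, G.Adj u v ∧ G.Adj v w ∧ u ∈ D ∧ v ∈ D ∧ w ∉ D ∧
    D' = insert w ((D.erase u).erase v)

/-- The reach of a distribution: all vertices reachable by a finite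
sequence of pegging moves. -/
def PegReach {V : Type*} (G : SimpleGraph V) [DecidableEq V] (D : Finset V) : Set V :=
  {t | ∃ D' : Finset V, Relation.ReflTransGen (PegMove G) D D' ∧ t ∈ D'}

/-- The pegging number: least positive `k` such that every distribution of
`k` pegs has full reach. -/
noncomputable def PeggingNumber {V : Type*} (G : SimpleGraph V) [DecidableEq V] : ℕ :=
  sInf {k | 0 < k ∧ ∀ D : Finset V, D.card = k → PegReach G D = Set.univ}

/-- The optimal pegging number: least positive `k` such that some distribution of
`k` pegs has full reach. -/
noncomputable def OptPeggingNumber {V : Type*} (G : SimpleGraph V) [DecidableEq V] : ℕ :=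
  sInf {k | 0 < k ∧ ∃ D : Finset V, D.card = k ∧ PegReach G D = Set.univ}

/-! More than `min m n` pegs put two pegs on a common line, a row say when `m ≤ n`. From such a
pair one can always bring a second peg into the row or the column of any target vertex and then
jump onto it. Conversely, `k ≤ min m n` pegs on a diagonal are pairwise non-adjacent, so no move
is possible, and they do not cover the `m n ≥ 2` vertices. -/

section PegMoves

variable [DecidableEq V] [DecidableEq W] {G : SimpleGraph V} {H : SimpleGraph W}
  {D D' : Finset V} {u v w : V}

lemma mem_pegReach_of_mem (hw : w ∈ D) : w ∈ PegReach G D :=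
  ⟨D, .refl, hw⟩

lemma PegMove.pegReach_subset (h : PegMove G D D') : PegReach G D' ⊆ PegReach G D :=
  fun _ ⟨E, hE, htE⟩ => ⟨E, .head h hE, htE⟩

lemma PegMove.card_add_one (h : PegMove G D D') : D'.card + 1 = D.card := by
  obtain ⟨u, v, w, huv, -, hu, hv, hw, rfl⟩ := h
  have hvu : v ∈ D.erase u := mem_erase.2 ⟨huv.ne.symm, hv⟩
  rw [card_insert_of_notMem fun hw' => hw (mem_of_mem_erase (mem_of_mem_erase hw')),
    card_erase_of_mem hvu, card_erase_of_mem hu]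
  have : 1 < D.card := one_lt_card.2 ⟨u, hu, v, hv, huv.ne⟩
  omega

lemma exists_pegMove (huv : G.Adj u v) (hvw : G.Adj v w) (hu : u ∈ D) (hv : v ∈ D)
    (hw : w ∉ D) :
    ∃ D', PegMove G D D' ∧ w ∈ D' ∧ D' ⊆ insert w D ∧ ∀ x ∈ D, x ≠ u → x ≠ v → x ∈ D' := by
  refine ⟨_, ⟨u, v, w, huv, hvw, hu, hv, hw, rfl⟩, mem_insert_self _ _, ?_, ?_⟩
  · exact insert_subset_insert _ ((erase_subset _ _).trans (erase_subset _ _))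
  · exact fun x hx hxu hxv => mem_insert_of_mem (mem_erase.2 ⟨hxv, mem_erase.2 ⟨hxu, hx⟩⟩)

lemma mem_pegReach_of_adj (huv : G.Adj u v) (hvw : G.Adj v w) (hu : u ∈ D) (hv : v ∈ D) :
    w ∈ PegReach G D := by
  by_cases hw : w ∈ D
  · exact mem_pegReach_of_mem hw
  · obtain ⟨D', hmove, hwD', -⟩ := exists_pegMove huv hvw hu hv hw
    exact hmove.pegReach_subset (mem_pegReach_of_mem hwD')

lemma SimpleGraph.IsClique.mem_pegReach {s : Set V} (hs : G.IsClique s) (hus : u ∈ s)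
    (hvs : v ∈ s) (hws : w ∈ s) (huv : u ≠ v) (hu : u ∈ D) (hv : v ∈ D) :
    w ∈ PegReach G D := by
  rcases eq_or_ne v w with rfl | hvw
  · exact mem_pegReach_of_mem hv
  · exact mem_pegReach_of_adj (hs hus hvs huv) (hs hvs hws hvw) hu hv

-- Landing a peg on `w`, next to a surviving peg `p` of the clique `s`, reaches all of `s`.
lemma SimpleGraph.IsClique.mem_pegReach_of_adj {s : Set V} {p t : V} (hs : G.IsClique s)
    (huv : G.Adj u v) (hvw : G.Adj v w) (hu : u ∈ D) (hv : v ∈ D) (hp : p ∈ D) (hpu : p ≠ u)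
    (hpv : p ≠ v) (hps : p ∈ s) (hws : w ∈ s) (hpw : p ≠ w) (hts : t ∈ s) : t ∈ PegReach G D := by
  by_cases hw : w ∈ D
  · exact hs.mem_pegReach hps hws hts hpw hp hw
  · obtain ⟨D', hmove, hwD', -, hD'⟩ := exists_pegMove huv hvw hu hv hw
    exact hmove.pegReach_subset (hs.mem_pegReach hps hws hts hpw (hD' p hp hpu hpv) hwD')

lemma pegReach_eq_of_isIndepSet (hD : G.IsIndepSet D) : PegReach G D = D := by
  refine Set.Subset.antisymm ?_ fun _ => mem_pegReach_of_mem
  rintro t ⟨E, hE, htE⟩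
  rcases hE.cases_head with rfl | ⟨_, ⟨u, v, -, huv, -, hu, hv, -⟩, -⟩
  · exact htE
  · exact absurd huv (hD hu hv huv.ne)

lemma pegReach_ne_univ_of_isIndepSet [Fintype V] (hD : G.IsIndepSet D)
    (hcard : D.card < Fintype.card V) : PegReach G D ≠ Set.univ := by
  rw [pegReach_eq_of_isIndepSet hD, Ne, coe_eq_univ]
  rintro rfl
  exact hcard.ne rfl

lemma PegMove.image (e : G ≃g H) (h : PegMove G D D') :
    PegMove H (D.image e) (D'.image e) := by
  obtain ⟨u, v, w, huv, hvw, hu, hv, hw, rfl⟩ := h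
  refine ⟨e u, e v, e w, e.map_adj_iff.2 huv, e.map_adj_iff.2 hvw, mem_image_of_mem _ hu,
    mem_image_of_mem _ hv, fun hw' => hw ?_, ?_⟩
  · exact e.injective.mem_finset_image.1 hw'
  · rw [image_insert, image_erase e.injective, image_erase e.injective]

lemma SimpleGraph.Iso.image_pegReach_subset (e : G ≃g H) (D : Finset V) :
    e '' PegReach G D ⊆ PegReach H (D.image e) := by
  rintro _ ⟨t, ⟨E, hE, htE⟩, rfl⟩
  exact ⟨E.image e, Relation.ReflTransGen.lift (fun E : Finset V => E.image e)
    (fun _ _ => PegMove.image e) _ _ hE, mem_image_of_mem _ htE⟩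

lemma SimpleGraph.Iso.pegReach_eq_univ_of_image (e : G ≃g H)
    (h : PegReach H (D.image e) = Set.univ) : PegReach G D = Set.univ := by
  refine Set.eq_univ_of_forall fun t => ?_
  have := Iso.image_pegReach_subset e.symm (D.image e) ⟨e t, h ▸ Set.mem_univ _, rfl⟩
  simpa [image_image, Function.comp_def] using this

lemma peggingNumber_eq_of {k : ℕ} (hk : 0 < k)
    (hfull : ∀ D : Finset V, D.card = k → PegReach G D = Set.univ)
    (hpartial : ∀ j, 0 < j → j < k → ∃ D : Finset V, D.card = j ∧ PegReach G D ≠ Set.univ) :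
    PeggingNumber G = k := by
  refine le_antisymm (Nat.sInf_le ⟨hk, hfull⟩) (le_csInf ⟨k, hk, hfull⟩ ?_)
  rintro j ⟨hj, hjfull⟩
  by_contra! hjk
  obtain ⟨D, hD, hne⟩ := hpartial j hj hjk
  exact hne (hjfull D hD)

end PegMoves

section RookGraph

abbrev rookGraph (α β : Type*) : SimpleGraph (α × β) :=
  (⊤ : SimpleGraph α) □ (⊤ : SimpleGraph β)

variable {α β : Type*} {D : Finset (α × β)}

lemma rookGraph_adj_of_fst_eq {x y : α × β} (h : x.1 = y.1) (hne : x.2 ≠ y.2) :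
    (rookGraph α β).Adj x y :=
  boxProd_adj.2 (.inr ⟨hne, h⟩)

lemma rookGraph_adj_of_snd_eq {x y : α × β} (h : x.2 = y.2) (hne : x.1 ≠ y.1) :
    (rookGraph α β).Adj x y :=
  boxProd_adj.2 (.inl ⟨hne, h⟩)

lemma isClique_rookGraph_row (a : α) : (rookGraph α β).IsClique {x | x.1 = a} := by
  rintro x rfl y hy hxy
  exact rookGraph_adj_of_fst_eq hy.symm fun h => hxy (Prod.ext hy.symm h)

lemma isClique_rookGraph_col (b : β) : (rookGraph α β).IsClique {x | x.2 = b} := by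
  rintro x rfl y hy hxy
  exact rookGraph_adj_of_snd_eq hy.symm fun h => hxy (Prod.ext h hy.symm)

lemma exists_ne_fst_eq_of_card_lt (s : Finset α) (hs : ∀ x ∈ D, x.1 ∈ s)
    (h : s.card < D.card) : ∃ u ∈ D, ∃ v ∈ D, u ≠ v ∧ u.1 = v.1 :=
  exists_ne_map_eq_of_card_lt_of_maps_to h hs

lemma exists_isIndepSet_rookGraph [Fintype α] [Fintype β] {k : ℕ} (hα : k ≤ Fintype.card α)
    (hβ : k ≤ Fintype.card β) :
    ∃ D : Finset (α × β), D.card = k ∧ (rookGraph α β).IsIndepSet D := by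
  obtain ⟨f⟩ := Function.Embedding.nonempty_of_card_le (α := Fin k) (by simpa using hα)
  obtain ⟨g⟩ := Function.Embedding.nonempty_of_card_le (α := Fin k) (by simpa using hβ)
  refine ⟨univ.map ⟨fun c => (f c, g c), fun c d h => f.injective (congrArg Prod.fst h)⟩,
    by simp, ?_⟩
  simp only [coe_map, coe_univ, Set.image_univ]
  rintro _ ⟨c, rfl⟩ _ ⟨d, rfl⟩ hcd hadj
  rcases boxProd_adj.1 hadj with ⟨hf, hg⟩ | ⟨hg, hf⟩
  · exact hf.ne (congrArg f (g.injective hg))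
  · exact hg.ne (congrArg g (f.injective hf))

variable [DecidableEq α] [DecidableEq β] {u v : α × β}

lemma mem_pegReach_rookGraph_of_mem_col {a c : α} {b : β} (hu : u ∈ D) (hv : v ∈ D)
    (huv : u ≠ v) (hrow : u.1 = v.1) (hc : (c, b) ∈ D) :
    (a, b) ∈ PegReach (rookGraph α β) D := by
  by_cases hub : (u.1, b) ∈ D
  · rcases eq_or_ne a u.1 with rfl | hau
    · exact mem_pegReach_of_mem hub
    obtain ⟨x, hx, hxu, hxne⟩ : ∃ x ∈ D, x.1 = u.1 ∧ x.2 ≠ b := by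
      rcases eq_or_ne u.2 b with hb | hb
      · exact ⟨v, hv, hrow.symm, fun hvb => huv (Prod.ext hrow (hb.trans hvb.symm))⟩
      · exact ⟨u, hu, rfl, hb⟩
    exact mem_pegReach_of_adj (v := (u.1, b)) (rookGraph_adj_of_fst_eq hxu hxne)
      (rookGraph_adj_of_snd_eq rfl (Ne.symm hau)) hx hub
  · have hcu : c ≠ u.1 := fun h => hub (h ▸ hc)
    have hvb : v.2 ≠ b := fun h => hub (by rw [hrow, ← h]; exact hv)
    exact (isClique_rookGraph_col b).mem_pegReach_of_adj (p := (c, b)) (w := (u.1, b))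
      (isClique_rookGraph_row u.1 rfl hrow.symm huv) (rookGraph_adj_of_fst_eq hrow.symm hvb)
      hu hv hc
      (fun h => hcu (congrArg Prod.fst h)) (fun h => hcu (hrow ▸ congrArg Prod.fst h))
      rfl rfl (fun h => hcu (congrArg Prod.fst h)) rfl

lemma mem_pegReach_rookGraph_of_mem_row {a : α} {b j : β} (hu : u ∈ D) (hv : v ∈ D)
    (huv : u ≠ v) (hrow : u.1 = v.1) (hua : u.1 ≠ a) (hj : (a, j) ∈ D) :
    (a, b) ∈ PegReach (rookGraph α β) D := by
  wlog hvj : v.2 ≠ j generalizing u v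
  · exact this hv hu huv.symm hrow.symm (hrow ▸ hua) fun huj =>
      huv (Prod.ext hrow (huj.trans (not_not.1 hvj).symm))
  have hva : v.1 ≠ a := hrow ▸ hua
  exact (isClique_rookGraph_row a).mem_pegReach_of_adj (p := (a, j)) (w := (a, v.2))
    (isClique_rookGraph_row u.1 rfl hrow.symm huv) (rookGraph_adj_of_snd_eq rfl hva)
    hu hv hj (fun h => hua (congrArg Prod.fst h).symm) (fun h => hva (congrArg Prod.fst h).symm)
    rfl rfl (fun h => hvj (congrArg Prod.snd h).symm) rfl

lemma pegReach_rookGraph_eq_univ_of_card_lt [Fintype α] (hD : Fintype.card α < D.card) :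
    PegReach (rookGraph α β) D = Set.univ := by
  refine Set.eq_univ_of_forall fun ⟨a, b⟩ => ?_
  obtain ⟨u, hu, v, hv, huv, hrow⟩ :=
    exists_ne_fst_eq_of_card_lt univ (fun _ _ => mem_univ _) hD
  by_cases hcol : ∃ c, (c, b) ∈ D
  · obtain ⟨c, hc⟩ := hcol
    exact mem_pegReach_rookGraph_of_mem_col hu hv huv hrow hc
  by_cases hrowa : ∃ j, (a, j) ∈ D
  · obtain ⟨j, hj⟩ := hrowa
    rcases eq_or_ne u.1 a with rfl | hua
    · exact (isClique_rookGraph_row u.1).mem_pegReach (w := (u.1, b))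
        rfl hrow.symm rfl huv hu hv
    · exact mem_pegReach_rookGraph_of_mem_row hu hv huv hrow hua hj
  push Not at hcol hrowa
  -- Row `a` and column `b` are empty. Moving the pair onto column `b` keeps row `a` empty,
  -- so the `card α` remaining pegs sit in `card α - 1` rows and another pair appears.
  have hvb : v.2 ≠ b := fun h => hcol v.1 (h ▸ hv)
  obtain ⟨D', hmove, hbD', hD'D, -⟩ := exists_pegMove (w := (u.1, b))
    (isClique_rookGraph_row u.1 rfl hrow.symm huv) (rookGraph_adj_of_fst_eq hrow.symm hvb)
    hu hv (hcol u.1)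
  have hrowD' : ∀ x ∈ D', x.1 ∈ univ.erase a := by
    intro x hx
    refine mem_erase.2 ⟨?_, mem_univ _⟩
    rcases mem_insert.1 (hD'D hx) with rfl | hxD
    · exact fun h => hrowa u.2 (h ▸ hu)
    · exact fun h => hrowa x.2 (h ▸ hxD)
  have hcard := hmove.card_add_one
  have hα : 0 < Fintype.card α := Fintype.card_pos_iff.2 ⟨a⟩
  obtain ⟨p, hp, q, hq, hpq, hpq1⟩ := exists_ne_fst_eq_of_card_lt _ hrowD'
    (by rw [card_erase_of_mem (mem_univ a), card_univ]; omega)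
  exact hmove.pegReach_subset (mem_pegReach_rookGraph_of_mem_col hp hq hpq hpq1 hbD')

lemma pegReach_rookGraph_eq_univ [Fintype α] [Fintype β]
    (hD : min (Fintype.card α) (Fintype.card β) < D.card) :
    PegReach (rookGraph α β) D = Set.univ := by
  rcases min_lt_iff.1 hD with h | h
  · exact pegReach_rookGraph_eq_univ_of_card_lt h
  · let e : rookGraph α β ≃g rookGraph β α := boxProdComm ⊤ ⊤
    refine Iso.pegReach_eq_univ_of_image e (pegReach_rookGraph_eq_univ_of_card_lt ?_)
    rwa [card_image_of_injective _ e.injective]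

end RookGraph

theorem peggingNumber_complete_boxProd_general (m n : ℕ)
    (h : ¬ (m = 1 ∧ n = 1)) :
    PeggingNumber ((⊤ : SimpleGraph (Fin m)) □ (⊤ : SimpleGraph (Fin n))) =
      min m n + 1 := by
  refine peggingNumber_eq_of (Nat.succ_pos _)
    (fun D hD => pegReach_rookGraph_eq_univ (by simp [hD])) fun j hj0 hj => ?_
  have hjm : j ≤ m := by omega
  have hjn : j ≤ n := by omega
  obtain ⟨D, hD, hindep⟩ :=
    exists_isIndepSet_rookGraph (α := Fin m) (β := Fin n) (by simpa) (by simpa)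
  refine ⟨D, hD, pegReach_ne_univ_of_isIndepSet hindep ?_⟩
  simp only [hD, Fintype.card_prod, Fintype.card_fin]
  rcases Nat.lt_or_ge 1 m with hm | hm
  · nlinarith
  · obtain rfl : m = 1 := by omega
    omega

theorem peggingNumber_complete_boxProd (m n : ℕ) (hm : 0 < m) (hn : 0 < n)
    (h : ¬ (m = 1 ∧ n = 1)) :
    PeggingNumber ((⊤ : SimpleGraph (Fin m)) □ (⊤ : SimpleGraph (Fin n))) =
      min m n + 1 :=
  peggingNumber_complete_boxProd_general m n h
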